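/- arXiv:math-ph/0604023 — 3 statements merged into one kernel-verified Lean document; each statement's English description precedes it below -/
import Mathlib

section
/- Let H be a Hilbert space, φ ∈ H a unit vector, A a subalgebra of bounded operators on H with commutant A', and L a self-adjoint operator on H. Suppose A'φ is dense in H, e^{iLτ} A e^{-iLτ} ⊆ A for all τ, Lφ = 0, and L has purely absolutely continuous spectrum on the orthogonal complement of φ. Then for every trace-class positive operator ρ with Tr ρ = 1 and every B ∈ A, lim_{τ→∞} Tr(ρ e^{iLτ} B e^{-iLτ}) = ⟨φ, Bφ⟩. -/
/-!
The spectral hypothesis writes `⟪ζ, U τ χ⟫` for `ζ, χ ⊥ φ` as the Fourier transform of an `L¹`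
function, so by Riemann–Lebesgue and the invariance of `φ` we get
`⟪ζ, U τ χ⟫ → ⟪ζ, φ⟫⟪φ, χ⟫` for all `ζ, χ`. For `B₁, B₂ ∈ A'` the evolved observable
`Bτ = U τ B U (-τ)` lies in `A`, hence commutes with `B₂`, and `U (-τ) φ = φ` gives
`⟪B₁φ, Bτ B₂φ⟫ = ⟪B₂† B₁φ, U τ Bφ⟫ → ⟪B₁φ, B₂φ⟫⟪φ, Bφ⟫`. As `‖Bτ‖ ≤ ‖B‖` and `A'φ` is dense,
`Bτ → ⟪φ, Bφ⟫ • 1` weakly, and dominated convergence carries this through the sum over `ρ`.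
-/

open Filter Topology MeasureTheory

open scoped InnerProductSpace NNReal

open Complex in
theorem tendsto_integral_exp_mul_atTop (f : ℝ → ℂ) :
    Tendsto (fun τ : ℝ => ∫ x : ℝ, exp (I * τ * x) * f x) atTop (𝓝 0) := by
  have hscale : Tendsto (fun τ : ℝ => -τ / (2 * Real.pi)) atTop (cocompact ℝ) :=
    (tendsto_neg_atTop_atBot.atBot_div_const (by positivity)).mono_right atBot_le_cocompact
  convert (Real.tendsto_integral_exp_smul_cocompact f).comp hscale using 2 with τ
  refine integral_congr_ae (Eventually.of_forall fun x => ?_)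
  simp only [Circle.smul_def, Real.fourierChar_apply, smul_eq_mul]
  have hx : 2 * Real.pi * -(x * (-τ / (2 * Real.pi))) = τ * x := by field_simp
  rw [hx]
  push_cast
  ring_nf

theorem tendsto_of_dense_of_lipschitzWith {ι X α : Type*} [PseudoMetricSpace X]
    [PseudoMetricSpace α] {l : Filter ι} {F : ι → X → α} {f : X → α} {K : ℝ≥0}
    (hF : ∀ i, LipschitzWith K (F i)) (hf : Continuous f) {D : Set X} (hD : Dense D)
    (h : ∀ x ∈ D, Tendsto (F · x) l (𝓝 (f x))) (x : X) : Tendsto (F · x) l (𝓝 (f x)) :=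
  hD.induction h
    ((LipschitzWith.uniformEquicontinuous F K hF).equicontinuous.isClosed_setOfPred_tendsto hf) x

section InnerProductSpace

variable {𝕜 E ι : Type*} [RCLike 𝕜] [NormedAddCommGroup E] [InnerProductSpace 𝕜 E]
  {l : Filter ι}

theorem ContinuousLinearMap.norm_le_one_of_inner_map_map {U : E →L[𝕜] E}
    (hU : ∀ x y, ⟪U x, U y⟫_𝕜 = ⟪x, y⟫_𝕜) : ‖U‖ ≤ 1 :=
  U.opNorm_le_bound zero_le_one fun x => by
    rw [(LinearMap.norm_map_iff_inner_map_map U).2 hU, one_mul]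

theorem ContinuousLinearMap.norm_mul_mul_le_of_norm_le_one {V B W : E →L[𝕜] E}
    (hV : ‖V‖ ≤ 1) (hW : ‖W‖ ≤ 1) : ‖V * B * W‖ ≤ ‖B‖ :=
  calc ‖V * B * W‖ ≤ ‖V‖ * ‖B‖ * ‖W‖ := (norm_mul_le _ _).trans (by gcongr; exact norm_mul_le _ _)
    _ ≤ 1 * ‖B‖ * 1 := by gcongr
    _ = ‖B‖ := by ring

theorem tendsto_inner_apply_of_dense {T : ι → E →L[𝕜] E} {S : E →L[𝕜] E} {M : ℝ}
    (hT : ∀ i, ‖T i‖ ≤ M) {D : Set E} (hD : Dense D)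
    (h : ∀ x ∈ D, ∀ y ∈ D, Tendsto (fun i => ⟪x, T i y⟫_𝕜) l (𝓝 ⟪x, S y⟫_𝕜)) (x y : E) :
    Tendsto (fun i => ⟪x, T i y⟫_𝕜) l (𝓝 ⟪x, S y⟫_𝕜) := by
  have hright : ∀ x ∈ D, ∀ y, Tendsto (fun i => ⟪x, T i y⟫_𝕜) l (𝓝 ⟪x, S y⟫_𝕜) := by
    refine fun x hx => tendsto_of_dense_of_lipschitzWith
      (fun i => LipschitzWith.of_dist_le' (K := ‖x‖ * M) fun y y' => ?_) (by fun_prop) hD (h x hx)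
    rw [dist_eq_norm, dist_eq_norm, ← inner_sub_right, ← map_sub]
    calc ‖⟪x, T i (y - y')⟫_𝕜‖ ≤ ‖x‖ * (‖T i‖ * ‖y - y'‖) :=
          (norm_inner_le_norm _ _).trans (by gcongr; exact (T i).le_opNorm _)
      _ ≤ ‖x‖ * M * ‖y - y'‖ := by rw [← mul_assoc]; gcongr; exact hT i
  refine tendsto_of_dense_of_lipschitzWith (F := fun i x => ⟪x, T i y⟫_𝕜)
    (fun i => LipschitzWith.of_dist_le' (K := M * ‖y‖) fun x x' => ?_) (by fun_prop) hD
    (fun x hx => hright x hx y) x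
  rw [dist_eq_norm, dist_eq_norm, ← inner_sub_left]
  calc ‖⟪x - x', T i y⟫_𝕜‖ ≤ ‖x - x'‖ * (‖T i‖ * ‖y‖) :=
        (norm_inner_le_norm _ _).trans (by gcongr; exact (T i).le_opNorm _)
    _ ≤ M * ‖y‖ * ‖x - x'‖ := by rw [mul_comm]; gcongr; exact hT i

theorem tendsto_tsum_mul_inner_apply {β : Type*} {T : ι → E →L[𝕜] E} {M : ℝ}
    (hT : ∀ i, ‖T i‖ ≤ M) {p : β → ℝ} (hp : ∀ n, 0 ≤ p n) (hpsum : Summable p) {ψ : β → E}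
    (hψ : ∀ n, ‖ψ n‖ = 1) {a : β → 𝕜}
    (h : ∀ n, Tendsto (fun i => ⟪ψ n, T i (ψ n)⟫_𝕜) l (𝓝 (a n))) :
    Tendsto (fun i => ∑' n, (p n : 𝕜) * ⟪ψ n, T i (ψ n)⟫_𝕜) l (𝓝 (∑' n, (p n : 𝕜) * a n)) := by
  refine tendsto_tsum_of_dominated_convergence (hpsum.mul_right M)
    (fun n => (h n).const_mul _) (Eventually.of_forall fun i n => ?_)
  rw [norm_mul, RCLike.norm_ofReal, abs_of_nonneg (hp n)]
  refine mul_le_mul_of_nonneg_left ?_ (hp n)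
  calc ‖⟪ψ n, T i (ψ n)⟫_𝕜‖ ≤ ‖ψ n‖ * (‖T i‖ * ‖ψ n‖) :=
        (norm_inner_le_norm _ _).trans (by gcongr; exact (T i).le_opNorm _)
    _ ≤ M := by rw [hψ, one_mul, mul_one]; exact hT i

end InnerProductSpace

section UnitaryGroup

variable {H : Type*} [NormedAddCommGroup H] [InnerProductSpace ℂ H] {U : ℝ → H →L[ℂ] H} {φ : H}

theorem inner_sub_inner_smul_eq_zero (hφ : ‖φ‖ = 1) (v : H) : ⟪φ, v - ⟪φ, v⟫_ℂ • φ⟫_ℂ = 0 := by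
  rw [inner_sub_right, inner_smul_right, inner_self_eq_norm_sq_to_K, hφ]
  simp

theorem tendsto_inner_apply_of_fourier_integral (hφ : ‖φ‖ = 1)
    (hU : ∀ (τ : ℝ) (x y : H), ⟪U τ x, U τ y⟫_ℂ = ⟪x, y⟫_ℂ) (hφfix : ∀ τ, U τ φ = φ)
    (hac : ∀ ψ χ : H, ⟪φ, ψ⟫_ℂ = 0 → ⟪φ, χ⟫_ℂ = 0 →
      ∃ f : ℝ → ℂ, Integrable f ∧
        ∀ τ : ℝ, ⟪ψ, U τ χ⟫_ℂ = ∫ x : ℝ, Complex.exp (Complex.I * τ * x) * f x)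
    (ζ χ : H) : Tendsto (fun τ => ⟪ζ, U τ χ⟫_ℂ) atTop (𝓝 (⟪ζ, φ⟫_ℂ * ⟪φ, χ⟫_ℂ)) := by
  set ζ' := ζ - ⟪φ, ζ⟫_ℂ • φ
  set χ' := χ - ⟪φ, χ⟫_ℂ • φ
  have hζ' : ⟪φ, ζ'⟫_ℂ = 0 := inner_sub_inner_smul_eq_zero hφ ζ
  have hχ' : ⟪φ, χ'⟫_ℂ = 0 := inner_sub_inner_smul_eq_zero hφ χ
  have hsplit : ∀ τ, ⟪ζ, U τ χ⟫_ℂ = ⟪ζ, φ⟫_ℂ * ⟪φ, χ⟫_ℂ + ⟪ζ', U τ χ'⟫_ℂ := by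
    intro τ
    have hφUχ' : ⟪φ, U τ χ'⟫_ℂ = 0 := by
      calc ⟪φ, U τ χ'⟫_ℂ = ⟪U τ φ, U τ χ'⟫_ℂ := by rw [hφfix]
        _ = 0 := by rw [hU, hχ']
    have hUχ : U τ χ = U τ χ' + ⟪φ, χ⟫_ℂ • φ := by
      rw [map_sub, map_smul, hφfix, sub_add_cancel]
    rw [hUχ, inner_add_right, inner_smul_right, inner_sub_left, inner_smul_left, hφUχ']
    ring
  obtain ⟨f, -, hf⟩ := hac ζ' χ' hζ' hχ'
  simp_rw [hsplit, hf]
  simpa using tendsto_const_nhds.add (tendsto_integral_exp_mul_atTop f)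

theorem tendsto_inner_conj_apply_of_commute [CompleteSpace H] (hφfix : ∀ τ, U τ φ = φ)
    (hmix : ∀ ζ χ, Tendsto (fun τ => ⟪ζ, U τ χ⟫_ℂ) atTop (𝓝 (⟪ζ, φ⟫_ℂ * ⟪φ, χ⟫_ℂ)))
    {B B₂ : H →L[ℂ] H} (hcomm : ∀ τ, Commute (U τ * B * U (-τ)) B₂) (B₁ : H →L[ℂ] H) :
    Tendsto (fun τ => ⟪B₁ φ, (U τ * B * U (-τ)) (B₂ φ)⟫_ℂ) atTop
      (𝓝 ⟪B₁ φ, ⟪φ, B φ⟫_ℂ • B₂ φ⟫_ℂ) := by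
  have hmove : ∀ τ, ⟪B₁ φ, (U τ * B * U (-τ)) (B₂ φ)⟫_ℂ =
      ⟪ContinuousLinearMap.adjoint B₂ (B₁ φ), U τ (B φ)⟫_ℂ := fun τ => by
    rw [← mul_apply_eq_comp, (hcomm τ).eq, mul_apply_eq_comp,
      ContinuousLinearMap.adjoint_inner_left]
    simp only [mul_apply_eq_comp, hφfix]
  simp_rw [hmove]
  convert hmix (ContinuousLinearMap.adjoint B₂ (B₁ φ)) (B φ) using 2
  rw [ContinuousLinearMap.adjoint_inner_left, inner_smul_right, mul_comm]

end UnitaryGroup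

theorem stmt0_general
    {H : Type*} [NormedAddCommGroup H] [InnerProductSpace ℂ H] [CompleteSpace H]
    (A : Subalgebra ℂ (H →L[ℂ] H)) (φ : H) (hφ : ‖φ‖ = 1)
    (U : ℝ → (H →L[ℂ] H))
    (hUunitary : ∀ (τ : ℝ) (x y : H), (inner ℂ (U τ x) (U τ y) : ℂ) = inner ℂ x y)
    (hAinv : ∀ τ : ℝ, ∀ B ∈ A, U τ * B * U (-τ) ∈ A)
    (hφfix : ∀ τ : ℝ, U τ φ = φ)
    (hac : ∀ ψ χ : H, (inner ℂ φ ψ : ℂ) = 0 → (inner ℂ φ χ : ℂ) = 0 →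
      ∃ f : ℝ → ℂ, Integrable f ∧
        ∀ τ : ℝ, (inner ℂ ψ (U τ χ) : ℂ) = ∫ x : ℝ, Complex.exp (Complex.I * τ * x) * f x)
    (hdense : Dense {x : H | ∃ B' ∈ Subalgebra.centralizer ℂ (A : Set (H →L[ℂ] H)),
        x = B' φ})
    (p : ℕ → ℝ) (hp : ∀ n, 0 ≤ p n) (hptot : ∑' n, p n = 1)
    (ψ : ℕ → H) (hψ : ∀ n, ‖ψ n‖ = 1)
    (B : H →L[ℂ] H) (hB : B ∈ A) :
    Tendsto (fun τ : ℝ => ∑' n, (p n : ℂ) * inner ℂ (ψ n) ((U τ * B * U (-τ)) (ψ n)))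
      atTop (𝓝 (inner ℂ φ (B φ))) := by
  have hUnorm τ := ContinuousLinearMap.norm_le_one_of_inner_map_map (hUunitary τ)
  have hBτ τ : ‖U τ * B * U (-τ)‖ ≤ ‖B‖ :=
    ContinuousLinearMap.norm_mul_mul_le_of_norm_le_one (hUnorm τ) (hUnorm (-τ))
  have hmix := tendsto_inner_apply_of_fourier_integral hφ hUunitary hφfix hac
  have hweak : ∀ x y, Tendsto (fun τ => ⟪x, (U τ * B * U (-τ)) y⟫_ℂ) atTop
      (𝓝 ⟪x, (⟪φ, B φ⟫_ℂ • 1 : H →L[ℂ] H) y⟫_ℂ) := by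
    refine tendsto_inner_apply_of_dense hBτ hdense ?_
    rintro _ ⟨B₁, -, rfl⟩ _ ⟨B₂, hB₂, rfl⟩
    have hcomm τ : Commute (U τ * B * U (-τ)) B₂ :=
      (Subalgebra.mem_centralizer_iff ℂ).1 hB₂ _ (hAinv τ B hB)
    exact tendsto_inner_conj_apply_of_commute hφfix hmix hcomm B₁
  have hpsum : Summable p := by
    by_contra hns
    simp [tsum_eq_zero_of_not_summable hns] at hptot
  have hlimit : ∑' n, (p n : ℂ) * ⟪ψ n, (⟪φ, B φ⟫_ℂ • 1 : H →L[ℂ] H) (ψ n)⟫_ℂ = ⟪φ, B φ⟫_ℂ := by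
    simp [inner_self_eq_norm_sq_to_K, hψ, tsum_mul_right, ← Complex.ofReal_tsum, hptot]
  rw [← hlimit]
  exact tendsto_tsum_mul_inner_apply hBτ hp hpsum hψ fun n => hweak (ψ n) (ψ n)

/-- **Return to equilibrium lemma.** If `U` is a one-parameter unitary group on a
Hilbert space `H` (generated by a self-adjoint `L`), `φ` is a unit vector invariant
under `U` (i.e. `Lφ = 0`), the spectrum of `L` is purely absolutely continuous on the
orthogonal complement of `φ` (encoded by: all spectral measures of vectors orthogonal
to `φ` have an integrable density, equivalently `⟨ψ, U τ χ⟩` is the Fourier transform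
of an `L¹` function), `A` is a subalgebra of `B(H)` invariant under conjugation by `U`,
and `A'φ` is dense, then for any density matrix `ρ = ∑ pₙ |ψₙ⟩⟨ψₙ|` and any `B ∈ A`,
`Tr(ρ e^{iLτ} B e^{-iLτ}) → ⟨φ, Bφ⟩` as `τ → ∞`. -/
theorem stmt0
    {H : Type*} [NormedAddCommGroup H] [InnerProductSpace ℂ H] [CompleteSpace H]
    (A : Subalgebra ℂ (H →L[ℂ] H)) (φ : H) (hφ : ‖φ‖ = 1)
    (U : ℝ → (H →L[ℂ] H))
    (hU0 : U 0 = 1)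
    (hUadd : ∀ τ σ : ℝ, U (τ + σ) = U τ * U σ)
    (hUunitary : ∀ (τ : ℝ) (x y : H), (inner ℂ (U τ x) (U τ y) : ℂ) = inner ℂ x y)
    (hAinv : ∀ τ : ℝ, ∀ B ∈ A, U τ * B * U (-τ) ∈ A)
    (hφfix : ∀ τ : ℝ, U τ φ = φ)
    (hac : ∀ ψ χ : H, (inner ℂ φ ψ : ℂ) = 0 → (inner ℂ φ χ : ℂ) = 0 →
      ∃ f : ℝ → ℂ, Integrable f ∧
        ∀ τ : ℝ, (inner ℂ ψ (U τ χ) : ℂ) = ∫ x : ℝ, Complex.exp (Complex.I * τ * x) * f x)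
    (hdense : Dense {x : H | ∃ B' ∈ Subalgebra.centralizer ℂ (A : Set (H →L[ℂ] H)),
        x = B' φ})
    (p : ℕ → ℝ) (hp : ∀ n, 0 ≤ p n) (hptot : ∑' n, p n = 1)
    (ψ : ℕ → H) (hψ : ∀ n, ‖ψ n‖ = 1)
    (B : H →L[ℂ] H) (hB : B ∈ A) :
    Tendsto (fun τ : ℝ => ∑' n, (p n : ℂ) * inner ℂ (ψ n) ((U τ * B * U (-τ)) (ψ n)))
      atTop (𝓝 (inner ℂ φ (B φ))) :=
  stmt0_general A φ hφ U hUunitary hAinv hφfix hac hdense p hp hptot ψ hψ B hB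
end

section
/- The linear span of the functions y ↦ (1+y²)^{-n}, for n = 1, 2, 3, …, is dense in the subspace of even functions in L²(ℝ). -/
/-!
Approximate `f` in `L²` by a continuous compactly supported function and replace it by its even
part, which is no farther from the even function `f`. A continuous even function `h` with compact
support factors as `h y = F (t) * t` with `t = (1 + y²)⁻¹ ∈ (0, 1]` and `F` continuous on `[0, 1]`
(vanishing near `0`). Weierstrass approximation of `F` by a polynomial `p` within `δ` gives
`|h y - p(t) t| ≤ δ t`, and `y ↦ p(t) t` lies in the span, while `t` itself is square-integrable.
-/

open MeasureTheory Set Polynomial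
open scoped ENNReal

theorem eLpNorm_sub_evenPart_le {G : Type*} [MeasurableSpace G] [AddGroup G] [MeasurableNeg G]
    {μ : Measure G} [μ.IsNegInvariant] {p : ℝ≥0∞} (hp : 1 ≤ p) {f h : G → ℝ}
    (hf : AEStronglyMeasurable f μ) (hh : AEStronglyMeasurable h μ)
    (heven : ∀ᵐ y ∂μ, f (-y) = f y) :
    eLpNorm (f - fun y => (h y + h (-y)) / 2) p μ ≤ eLpNorm (f - h) p μ := by
  set u := f - h
  have hu : AEStronglyMeasurable u μ := hf.sub hh
  have hneg := Measure.measurePreserving_neg μ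
  have heq : (f - fun y => (h y + h (-y)) / 2) =ᵐ[μ] (2⁻¹ : ℝ) • (u + u ∘ Neg.neg) := by
    filter_upwards [heven] with y hy
    simp only [u, Pi.sub_apply, Pi.smul_apply, Pi.add_apply, Function.comp_apply, smul_eq_mul, hy]
    ring
  calc eLpNorm (f - fun y => (h y + h (-y)) / 2) p μ
      = 2⁻¹ * eLpNorm (u + u ∘ Neg.neg) p μ := by
        rw [eLpNorm_congr_ae heq, eLpNorm_const_smul]
        simp [Real.enorm_eq_ofReal_abs]
    _ ≤ 2⁻¹ * (eLpNorm u p μ + eLpNorm u p μ) := by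
        gcongr
        exact (eLpNorm_add_le hu (hu.comp_measurePreserving hneg) hp).trans_eq
          (by rw [eLpNorm_comp_measurePreserving hu hneg])
    _ = eLpNorm u p μ := by
        rw [← two_mul, ← mul_assoc, ENNReal.inv_mul_cancel two_ne_zero ENNReal.ofNat_ne_top,
          one_mul]

theorem Polynomial.eval_mul_mem_span_pow_succ {α R : Type*} [CommSemiring R] (w : α → R)
    (p : R[X]) :
    (fun x => p.eval (w x) * w x) ∈
      Submodule.span R (range fun n : ℕ => fun x => w x ^ (n + 1)) := by
  have hsum : (fun x => p.eval (w x) * w x) =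
      ∑ k ∈ Finset.range (p.natDegree + 1), p.coeff k • fun x => w x ^ (k + 1) := by
    funext x
    simp [Finset.sum_apply, eval_eq_sum_range, Finset.sum_mul, pow_succ, mul_assoc]
  rw [hsum]
  exact Submodule.sum_mem _ fun k _ => Submodule.smul_mem _ _ (Submodule.subset_span ⟨k, rfl⟩)

theorem continuous_inv_one_add_sq : Continuous fun y : ℝ => (1 + y ^ 2)⁻¹ :=
  (continuous_const.add (continuous_pow 2)).inv₀ fun y => (by positivity : (0 : ℝ) < 1 + y ^ 2).ne'

theorem inv_one_add_sq_mem_Icc (y : ℝ) : (1 + y ^ 2)⁻¹ ∈ Icc (0 : ℝ) 1 :=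
  ⟨by positivity, inv_le_one_of_one_le₀ (by nlinarith)⟩

theorem memLp_two_inv_one_add_sq : MemLp (fun y : ℝ => (1 + y ^ 2)⁻¹) 2 volume := by
  rw [memLp_two_iff_integrable_sq continuous_inv_one_add_sq.aestronglyMeasurable]
  refine integrable_inv_one_add_sq.mono (continuous_inv_one_add_sq.pow 2).aestronglyMeasurable
    (Filter.Eventually.of_forall fun y => ?_)
  obtain ⟨h0, h1⟩ := inv_one_add_sq_mem_Icc y
  rw [Real.norm_of_nonneg (by positivity), Real.norm_of_nonneg h0]
  nlinarith

theorem exists_continuousOn_Icc_eq_mul_inv_one_add_sq {h : ℝ → ℝ} (hc : Continuous h)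
    (hs : HasCompactSupport h) (heven : ∀ y, h (-y) = h y) :
    ∃ F : ℝ → ℝ, ContinuousOn F (Icc 0 1) ∧ ∀ y, h y = F (1 + y ^ 2)⁻¹ * (1 + y ^ 2)⁻¹ := by
  obtain ⟨R, hR0, hR⟩ := hs.exists_pos_le_norm
  refine ⟨fun t => h √(t⁻¹ - 1) * t⁻¹, ?_, fun y => ?_⟩
  · have hvanish : ∀ t ∈ Ico 0 (1 + R ^ 2)⁻¹, h √(t⁻¹ - 1) * t⁻¹ = 0 := by
      rintro t ⟨ht0, htR⟩
      rcases ht0.eq_or_lt with rfl | ht0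
      · simp
      have hRt : R ^ 2 ≤ t⁻¹ - 1 := by
        linarith [(lt_inv_comm₀ ht0 (by positivity)).mp htR]
      rw [hR _ (by rwa [Real.norm_of_nonneg (Real.sqrt_nonneg _), Real.le_sqrt hR0.le
        (by nlinarith)]), zero_mul]
    intro t ht
    rcases eq_or_ne t 0 with rfl | ht0
    · have hnear : Ico 0 (1 + R ^ 2)⁻¹ ∈ nhdsWithin (0 : ℝ) (Icc 0 1) :=
        nhdsWithin_mono 0 Icc_subset_Ici_self (Ico_mem_nhdsGE (by positivity))
      exact continuousWithinAt_const.congr_of_eventuallyEq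
        (Filter.mem_of_superset hnear hvanish) (hvanish 0 ⟨le_rfl, by positivity⟩)
    · have hinv : ContinuousAt (fun t : ℝ => t⁻¹) t := continuousAt_inv₀ ht0
      exact ((hc.continuousAt.comp (hinv.sub continuousAt_const).sqrt).mul hinv).continuousWithinAt
  · dsimp only
    rw [inv_inv, add_sub_cancel_left, Real.sqrt_sq_eq_abs,
      mul_inv_cancel_right₀ (by positivity : (1 + y ^ 2) ≠ 0)]
    rcases abs_choice y with hy | hy <;> rw [hy]
    exact (heven y).symm

theorem exists_polynomial_abs_sub_le_mul_inv_one_add_sq {h : ℝ → ℝ} (hc : Continuous h)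
    (hs : HasCompactSupport h) (heven : ∀ y, h (-y) = h y) {δ : ℝ} (hδ : 0 < δ) :
    ∃ p : ℝ[X], ∀ y,
      |h y - p.eval (1 + y ^ 2)⁻¹ * (1 + y ^ 2)⁻¹| ≤ δ * (1 + y ^ 2)⁻¹ := by
  obtain ⟨F, hF, hhF⟩ := exists_continuousOn_Icc_eq_mul_inv_one_add_sq hc hs heven
  obtain ⟨p, hp⟩ := exists_polynomial_near_of_continuousOn 0 1 F hF δ hδ
  refine ⟨p, fun y => ?_⟩
  have ht := inv_one_add_sq_mem_Icc y
  rw [hhF y, ← sub_mul, abs_mul, abs_of_nonneg ht.1, abs_sub_comm]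
  exact mul_le_mul_of_nonneg_right (hp _ ht).le ht.1

theorem exists_polynomial_eLpNorm_sub_eval_inv_one_add_sq_mul_lt {h : ℝ → ℝ} (hc : Continuous h)
    (hs : HasCompactSupport h) (heven : ∀ y, h (-y) = h y) {ε : ℝ≥0∞} (hε : ε ≠ 0) :
    ∃ p : ℝ[X], eLpNorm (h - fun y => p.eval (1 + y ^ 2)⁻¹ * (1 + y ^ 2)⁻¹) 2 volume < ε := by
  obtain ⟨δ, hδ, hδε⟩ := ENNReal.exists_nnreal_pos_mul_lt memLp_two_inv_one_add_sq.2.ne hε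
  obtain ⟨p, hp⟩ := exists_polynomial_abs_sub_le_mul_inv_one_add_sq hc hs heven (δ := δ) hδ
  refine ⟨p, lt_of_le_of_lt ?_ hδε⟩
  refine (eLpNorm_le_mul_eLpNorm_of_ae_le_mul (Filter.Eventually.of_forall fun y => ?_) 2).trans
    (by rw [ENNReal.ofReal_coe_nnreal])
  rw [Real.norm_of_nonneg (inv_one_add_sq_mem_Icc y).1]
  exact hp y

/-- The linear span of the functions `y ↦ (1+y²)⁻ⁿ`, `n = 1, 2, 3, …`, is dense in the
subspace of even functions in `L²(ℝ)`: every even square-integrable function can be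
approximated in the `L²` norm by elements of the span. -/
theorem stmt2 (f : ℝ → ℝ)
    (hf : MemLp f 2 (volume : Measure ℝ))
    (heven : ∀ᵐ y : ℝ, f (-y) = f y) :
    ∀ ε : ℝ, 0 < ε →
      ∃ g ∈ Submodule.span ℝ
          (Set.range fun n : ℕ => fun y : ℝ => ((1 + y ^ 2) ^ (n + 1) : ℝ)⁻¹),
        eLpNorm (f - g) 2 (volume : Measure ℝ) < ENNReal.ofReal ε := by
  intro ε hε
  have hε2 : ENNReal.ofReal ε / 2 ≠ 0 := by simpa using hε
  obtain ⟨h, hs, hfh, hc, -⟩ := hf.exists_hasCompactSupport_eLpNorm_sub_le ENNReal.ofNat_ne_top hε2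
  set he := fun y => (h y + h (-y)) / 2
  have hec : Continuous he := (hc.add (hc.comp continuous_neg)).div_const 2
  have hes : HasCompactSupport he :=
    (hs.add (hs.comp_homeomorph (Homeomorph.neg ℝ))).comp_left (g := (· / 2)) (zero_div 2)
  have he_even : ∀ y, he (-y) = he y := fun y => by simp only [he, neg_neg, add_comm]
  have hfhe : eLpNorm (f - he) 2 volume ≤ ENNReal.ofReal ε / 2 :=
    (eLpNorm_sub_evenPart_le one_le_two hf.1 hc.aestronglyMeasurable heven).trans hfh
  obtain ⟨p, hp⟩ := exists_polynomial_eLpNorm_sub_eval_inv_one_add_sq_mul_lt hec hes he_even hε2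
  set g := fun y : ℝ => p.eval (1 + y ^ 2)⁻¹ * (1 + y ^ 2)⁻¹
  have hgc : Continuous g :=
    (p.continuous.comp continuous_inv_one_add_sq).mul continuous_inv_one_add_sq
  refine ⟨g, by simpa only [← inv_pow] using eval_mul_mem_span_pow_succ _ p, ?_⟩
  calc eLpNorm (f - g) 2 volume = eLpNorm ((f - he) + (he - g)) 2 volume := by
        rw [sub_add_sub_cancel]
    _ ≤ eLpNorm (f - he) 2 volume + eLpNorm (he - g) 2 volume :=
        eLpNorm_add_le (hf.1.sub hec.aestronglyMeasurable) (hec.sub hgc).aestronglyMeasurable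
          one_le_two
    _ < ENNReal.ofReal ε / 2 + ENNReal.ofReal ε / 2 :=
        ENNReal.add_lt_add_of_le_of_lt (ne_top_of_le_ne_top (by finiteness) hfhe) hfhe hp
    _ = ENNReal.ofReal ε := ENNReal.add_halves _
end

section
/- With H_D = diag(E,0), L_D = H_D⊗1 - 1⊗H_D on ℂ²⊗ℂ², J_D = E∘(C⊗C) where C is componentwise complex conjugation and E the swap operator, and |β,D⟩ = (1+e^{-βE})^{-1/2}(|-⟩⊗|-⟩ + e^{-βE/2}|+⟩⊗|+⟩), one has for every 2×2 matrix B: e^{-βL_D/2}(B⊗1)|β,D⟩ = J_D (B*⊗1)|β,D⟩. -/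
/-!
In the product basis `L_D` is diagonal, with eigenvalue `h i - h j` on `|i⟩⊗|j⟩`. The vector
`(B⊗1)|β,D⟩` has `(i, j)`-entry `B i j * w j` with the real Gibbs weight `w j = c e^{-β h j / 2}`,
while `J_D (B*⊗1)|β,D⟩` has `(i, j)`-entry `B i j * w i`; the two agree because
`e^{-β (h i - h j) / 2} w j = w i`.
-/

open Matrix

open scoped Kronecker ComplexConjugate

variable {n : Type*} [DecidableEq n]

def liouvillian (H : Matrix n n ℂ) : Matrix (n × n) (n × n) ℂ := H ⊗ₖ 1 - 1 ⊗ₖ H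

def conjSwap (v : n × n → ℂ) : n × n → ℂ := fun p => conj (v p.swap)

noncomputable def gibbsVector (β c : ℝ) (h : n → ℝ) : n × n → ℂ :=
  fun p => if p.1 = p.2 then c * Complex.exp (-(β * h p.1) / 2) else 0

theorem liouvillian_diagonal (h : n → ℂ) :
    liouvillian (diagonal h) = diagonal fun p => h p.1 - h p.2 := by
  rw [liouvillian, ← diagonal_one, diagonal_kronecker_diagonal, diagonal_kronecker_diagonal,
    diagonal_sub]
  simp

variable [Fintype n]

theorem kronecker_one_mulVec_gibbsVector (B : Matrix n n ℂ) (β c : ℝ) (h : n → ℝ) (p : n × n) :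
    ((B ⊗ₖ 1) *ᵥ gibbsVector β c h) p = B p.1 p.2 * (c * Complex.exp (-(β * h p.2) / 2)) := by
  simp [mulVec, dotProduct, Fintype.sum_prod_type, gibbsVector, one_apply]

theorem exp_liouvillian_mulVec_gibbsVector_eq_conjSwap (B : Matrix n n ℂ) (β c : ℝ) (h : n → ℝ) :
    NormedSpace.exp ((-(β : ℂ) / 2) • liouvillian (diagonal fun i => (h i : ℂ))) *ᵥ
        ((B ⊗ₖ 1) *ᵥ gibbsVector β c h) =
      conjSwap ((Bᴴ ⊗ₖ 1) *ᵥ gibbsVector β c h) := by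
  ext ⟨i, j⟩
  rw [liouvillian_diagonal, ← diagonal_smul, exp_diagonal, mulVec_diagonal, conjSwap,
    kronecker_one_mulVec_gibbsVector, kronecker_one_mulVec_gibbsVector]
  have hweight : Complex.exp (-β / 2 * (h i - h j)) * Complex.exp (-(β * h j) / 2) =
      Complex.exp (-(β * h i) / 2) := by
    rw [← Complex.exp_add]; ring_nf
  simp only [Pi.coe_exp, Pi.smul_apply, smul_eq_mul, ← Complex.exp_eq_exp_ℂ, Prod.swap_prod_mk,
    conjTranspose_apply, RCLike.star_def, map_mul, Complex.conj_ofReal, ← Complex.exp_conj,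
    map_div₀, map_neg, map_ofNat, Complex.conj_conj]
  linear_combination (B i j * c) * hweight

theorem stmt12_general (E β : ℝ)
    (HD : Matrix (Fin 2) (Fin 2) ℂ) (hHD : HD = !![(E : ℂ), 0; 0, 0])
    (LD : Matrix (Fin 2 × Fin 2) (Fin 2 × Fin 2) ℂ)
    (hLD : LD = fun p q => HD p.1 q.1 * (if p.2 = q.2 then 1 else 0) -
      (if p.1 = q.1 then 1 else 0) * HD p.2 q.2)
    (tens : Matrix (Fin 2) (Fin 2) ℂ → Matrix (Fin 2 × Fin 2) (Fin 2 × Fin 2) ℂ)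
    (htens : tens = fun B p q => B p.1 q.1 * (if p.2 = q.2 then 1 else 0))
    (JD : (Fin 2 × Fin 2 → ℂ) → Fin 2 × Fin 2 → ℂ)
    (hJD : JD = fun v p => (starRingEnd ℂ) (v (p.2, p.1)))
    (c : ℂ) (hc : c = (((1 + Real.exp (-β * E)) ^ (-(1 : ℝ) / 2) : ℝ) : ℂ))
    (βD : Fin 2 × Fin 2 → ℂ)
    (hβD : βD = fun p => if p = (0, 0) then c * Complex.exp (-(β * E) / 2)
      else if p = (1, 1) then c else 0)
    (B : Matrix (Fin 2) (Fin 2) ℂ) :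
    (NormedSpace.exp ((-(β : ℂ) / 2) • LD)).mulVec ((tens B).mulVec βD) =
      JD ((tens Bᴴ).mulVec βD) := by
  have hHD_diagonal : HD = diagonal fun i => ((![E, 0] i : ℝ) : ℂ) := by
    rw [hHD]; ext i j; fin_cases i <;> fin_cases j <;> simp
  have hLD_liouvillian : LD = liouvillian HD := by
    rw [hLD]; ext p q; simp [liouvillian, one_apply]
  have htens_kronecker : tens = (· ⊗ₖ 1) := by
    rw [htens]; ext B p q; simp [one_apply]
  have hβD_gibbs : βD = gibbsVector β ((1 + Real.exp (-β * E)) ^ (-(1 : ℝ) / 2)) ![E, 0] := by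
    rw [hβD, hc]; ext ⟨i, j⟩; fin_cases i <;> fin_cases j <;> simp [gibbsVector]
  subst hJD
  rw [hLD_liouvillian, hHD_diagonal, htens_kronecker, hβD_gibbs]
  exact exp_liouvillian_mulVec_gibbsVector_eq_conjSwap B _ _ _

/-- The KMS condition for the free detector: with `H_D = diag(E, 0)`,
`L_D = H_D⊗1 - 1⊗H_D` acting on `ℂ²⊗ℂ²` (realized as `Fin 2 × Fin 2 → ℂ`, index
`0 ↔ |+⟩`, `1 ↔ |-⟩`), the modular conjugation `J_D = E∘(C⊗C)` (swap composed with
componentwise complex conjugation), and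
`|β,D⟩ = (1+e^{-βE})^{-1/2}( |-⟩⊗|-⟩ + e^{-βE/2} |+⟩⊗|+⟩ )`, one has
`e^{-βL_D/2}(B⊗1)|β,D⟩ = J_D (B*⊗1)|β,D⟩` for every `2×2` matrix `B`. -/
theorem stmt12 (E β : ℝ) (hE : 0 < E) (hβ : 0 < β)
    (HD : Matrix (Fin 2) (Fin 2) ℂ) (hHD : HD = !![(E : ℂ), 0; 0, 0])
    (LD : Matrix (Fin 2 × Fin 2) (Fin 2 × Fin 2) ℂ)
    (hLD : LD = fun p q => HD p.1 q.1 * (if p.2 = q.2 then 1 else 0) -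
      (if p.1 = q.1 then 1 else 0) * HD p.2 q.2)
    (tens : Matrix (Fin 2) (Fin 2) ℂ → Matrix (Fin 2 × Fin 2) (Fin 2 × Fin 2) ℂ)
    (htens : tens = fun B p q => B p.1 q.1 * (if p.2 = q.2 then 1 else 0))
    (JD : (Fin 2 × Fin 2 → ℂ) → Fin 2 × Fin 2 → ℂ)
    (hJD : JD = fun v p => (starRingEnd ℂ) (v (p.2, p.1)))
    (c : ℂ) (hc : c = (((1 + Real.exp (-β * E)) ^ (-(1 : ℝ) / 2) : ℝ) : ℂ))
    (βD : Fin 2 × Fin 2 → ℂ)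
    (hβD : βD = fun p => if p = (0, 0) then c * Complex.exp (-(β * E) / 2)
      else if p = (1, 1) then c else 0)
    (B : Matrix (Fin 2) (Fin 2) ℂ) :
    (NormedSpace.exp ((-(β : ℂ) / 2) • LD)).mulVec ((tens B).mulVec βD) =
      JD ((tens Bᴴ).mulVec βD) :=
  stmt12_general E β HD hHD LD hLD tens htens JD hJD c hc βD hβD B
end
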